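/- arXiv:2409.17779 — 3 statements merged into one kernel-verified Lean document; each statement's English description precedes it below -/
import Mathlib

section
/- Let μ : [0,∞) → ℝ satisfy m(t−s) ≤ μ(t)t − μ(s)s ≤ M(t−s) for all t ≥ s ≥ 0, with positive constants m, M. Then there exists a constant C₁ > 0 such that for all vectors v, w ∈ ℝ², |μ(|v|)v − μ(|w|)w| ≤ C₁|v − w|. -/
open scoped RealInnerProductSpace

lemma stmt_1_aux (μ : ℝ → ℝ) (m M : ℝ)
    (hm : 0 < m) (hM : 0 < M)
    (h : ∀ s t : ℝ, 0 ≤ s → s ≤ t →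
      m * (t - s) ≤ μ t * t - μ s * s ∧ μ t * t - μ s * s ≤ M * (t - s))
    (v w : EuclideanSpace ℝ (Fin 2)) (hle : ‖w‖ ≤ ‖v‖) :
    ‖μ ‖v‖ • v - μ ‖w‖ • w‖ ≤ (2 * M) * ‖v - w‖ := by
  set a := ‖v‖ with ha
  set b := ‖w‖ with hb
  have ha0 : 0 ≤ a := norm_nonneg v
  have hb0 : 0 ≤ b := norm_nonneg w
  rcases eq_or_lt_of_le ha0 with h0 | hapos
  · -- a = 0, hence v = w = 0
    have hv : v = 0 := norm_eq_zero.mp h0.symm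
    have hw : w = 0 := norm_eq_zero.mp (le_antisymm (h0 ▸ hle) hb0)
    simp [hv, hw]
  · -- a > 0
    have hμa : m ≤ μ a ∧ μ a ≤ M := by
      obtain ⟨h1, h2⟩ := h 0 a le_rfl ha0
      constructor
      · have : m * a ≤ μ a * a := by nlinarith
        exact le_of_mul_le_mul_right (by linarith) hapos
      · have : μ a * a ≤ M * a := by nlinarith
        exact le_of_mul_le_mul_right (by linarith) hapos
    have habs_a : |μ a| ≤ M := abs_le.mpr ⟨by linarith [hμa.1], hμa.2⟩
    have key : |μ a - μ b| * b ≤ M * (a - b) := by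
      rcases eq_or_lt_of_le hb0 with hb1 | hbpos
      · rw [← hb1]
        simp
        nlinarith
      · obtain ⟨h1, h2⟩ := h b a hb0 hle
        have heq : |μ a - μ b| * b = |(μ a - μ b) * b| := by
          rw [abs_mul, abs_of_pos hbpos]
        rw [heq]
        apply abs_le.mpr
        constructor
        · -- -(M*(a-b)) ≤ (μ a - μ b) * b
          nlinarith [mul_nonneg (sub_nonneg.mpr hμa.2) (sub_nonneg.mpr hle),
            mul_nonneg hm.le (sub_nonneg.mpr hle)]
        · nlinarith [mul_nonneg (sub_nonneg.mpr hμa.1) (sub_nonneg.mpr hle),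
            mul_nonneg hm.le (sub_nonneg.mpr hle)]
    have hdecomp : μ a • v - μ b • w = μ a • (v - w) + (μ a - μ b) • w := by
      module
    have hnorm_ab : a - b ≤ ‖v - w‖ := by
      have := abs_norm_sub_norm_le v w
      calc a - b ≤ |a - b| := le_abs_self _
        _ ≤ ‖v - w‖ := this
    calc ‖μ a • v - μ b • w‖
        = ‖μ a • (v - w) + (μ a - μ b) • w‖ := by rw [hdecomp]
      _ ≤ ‖μ a • (v - w)‖ + ‖(μ a - μ b) • w‖ := norm_add_le _ _
      _ = |μ a| * ‖v - w‖ + |μ a - μ b| * b := by rw [norm_smul, norm_smul]; rfl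
      _ ≤ M * ‖v - w‖ + M * (a - b) := by
          have h1 : |μ a| * ‖v - w‖ ≤ M * ‖v - w‖ :=
            mul_le_mul_of_nonneg_right habs_a (norm_nonneg _)
          linarith [key]
      _ ≤ M * ‖v - w‖ + M * ‖v - w‖ := by nlinarith
      _ = (2 * M) * ‖v - w‖ := by ring

theorem stmt_1 (μ : ℝ → ℝ) (hcont : ContinuousOn μ (Set.Ici 0)) (m M : ℝ)
    (hm : 0 < m) (hM : 0 < M)
    (h : ∀ s t : ℝ, 0 ≤ s → s ≤ t →
      m * (t - s) ≤ μ t * t - μ s * s ∧ μ t * t - μ s * s ≤ M * (t - s)) :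
    ∃ C₁ > (0 : ℝ), ∀ v w : EuclideanSpace ℝ (Fin 2),
      ‖μ ‖v‖ • v - μ ‖w‖ • w‖ ≤ C₁ * ‖v - w‖ := by
  refine ⟨2 * M, by positivity, fun v w => ?_⟩
  rcases le_total ‖w‖ ‖v‖ with hle | hle
  · exact stmt_1_aux μ m M hm hM h v w hle
  · calc ‖μ ‖v‖ • v - μ ‖w‖ • w‖
        = ‖μ ‖w‖ • w - μ ‖v‖ • v‖ := norm_sub_rev _ _
      _ ≤ (2 * M) * ‖w - v‖ := stmt_1_aux μ m M hm hM h w v hle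
      _ = (2 * M) * ‖v - w‖ := by rw [norm_sub_rev]
end

section
/- Let μ : [0,∞) → ℝ satisfy m(t−s) ≤ μ(t)t − μ(s)s ≤ M(t−s) for all t ≥ s ≥ 0, with positive constants m, M. Then there exists a constant C₂ > 0 such that for all vectors v, w ∈ ℝ², (μ(|v|)v − μ(|w|)w) · (v − w) ≥ C₂|v − w|². -/
/-!
Write `a = ‖v‖`, `b = ‖w‖` and `ψ t = μ t * t - m * t`. The hypothesis says `ψ` is monotone on
`[0, ∞)` with `ψ 0 = 0`, so `μ t ≥ m` for `t > 0`. Expanding the inner product and bounding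
`⟪v, w⟫ ≤ a b` (with the nonnegative weights `μ a - m`, `μ b - m`) leaves
`⟪μ a • v - μ b • w, v - w⟫ - m ‖v - w‖² ≥ (ψ a - ψ b) (a - b) ≥ 0`.
-/

open scoped RealInnerProductSpace

variable {E : Type*} [NormedAddCommGroup E] [InnerProductSpace ℝ E]

lemma real_inner_smul_sub_smul_sub (a b : ℝ) (v w : E) :
    ⟪a • v - b • w, v - w⟫ = a * ‖v‖ ^ 2 + b * ‖w‖ ^ 2 - (a + b) * ⟪v, w⟫ := by
  simp only [inner_sub_left, inner_sub_right, real_inner_smul_left,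
    real_inner_self_eq_norm_sq, real_inner_comm w v]
  ring

lemma mul_inner_le_mul_norm_mul_norm {c : ℝ → ℝ} (hc : ∀ t, 0 < t → 0 ≤ c t) (v w : E) :
    c ‖v‖ * ⟪v, w⟫ ≤ c ‖v‖ * (‖v‖ * ‖w‖) := by
  rcases eq_or_ne v 0 with rfl | hv
  · simp
  · exact mul_le_mul_of_nonneg_left (real_inner_le_norm v w) (hc _ (norm_pos_iff.2 hv))

lemma le_inner_smul_norm_sub_smul_norm {μ : ℝ → ℝ} {m : ℝ}
    (h : ∀ s t : ℝ, 0 ≤ s → s ≤ t → m * (t - s) ≤ μ t * t - μ s * s) (v w : E) :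
    m * ‖v - w‖ ^ 2 ≤ ⟪μ ‖v‖ • v - μ ‖w‖ • w, v - w⟫ := by
  have hμ : ∀ t, 0 < t → 0 ≤ μ t - m := fun t ht =>
    sub_nonneg.2 (le_of_mul_le_mul_right (by simpa using h 0 t le_rfl ht.le) ht)
  have hv := mul_inner_le_mul_norm_mul_norm hμ v w
  have hw := mul_inner_le_mul_norm_mul_norm hμ w v
  rw [real_inner_comm] at hw
  have hψ : 0 ≤ ((μ ‖v‖ * ‖v‖ - m * ‖v‖) - (μ ‖w‖ * ‖w‖ - m * ‖w‖)) * (‖v‖ - ‖w‖) := by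
    rcases le_total ‖w‖ ‖v‖ with hwv | hvw
    · have := h _ _ (norm_nonneg w) hwv
      exact mul_nonneg (by linarith) (by linarith)
    · have := h _ _ (norm_nonneg v) hvw
      exact mul_nonneg_of_nonpos_of_nonpos (by linarith) (by linarith)
  rw [real_inner_smul_sub_smul_sub, norm_sub_sq_real]
  linarith

theorem stmt_2_general (μ : ℝ → ℝ) (m M : ℝ)
    (hm : 0 < m)
    (h : ∀ s t : ℝ, 0 ≤ s → s ≤ t →
      m * (t - s) ≤ μ t * t - μ s * s ∧ μ t * t - μ s * s ≤ M * (t - s)) :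
    ∃ C₂ > (0 : ℝ), ∀ v w : EuclideanSpace ℝ (Fin 2),
      C₂ * ‖v - w‖ ^ 2 ≤ ⟪μ ‖v‖ • v - μ ‖w‖ • w, v - w⟫ :=
  ⟨m, hm, le_inner_smul_norm_sub_smul_norm fun s t hs hst => (h s t hs hst).1⟩

theorem stmt_2 (μ : ℝ → ℝ) (hcont : ContinuousOn μ (Set.Ici 0)) (m M : ℝ)
    (hm : 0 < m) (hM : 0 < M)
    (h : ∀ s t : ℝ, 0 ≤ s → s ≤ t →
      m * (t - s) ≤ μ t * t - μ s * s ∧ μ t * t - μ s * s ≤ M * (t - s)) :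
    ∃ C₂ > (0 : ℝ), ∀ v w : EuclideanSpace ℝ (Fin 2),
      C₂ * ‖v - w‖ ^ 2 ≤ ⟪μ ‖v‖ • v - μ ‖w‖ • w, v - w⟫ :=
  stmt_2_general μ m M hm h
end

section
/- The Carreau law μ(t) = k∞ + (k₀ − k∞)(1 + λt²)^((θ−2)/2), with constants k₀ > k∞ > 0, λ > 0 and θ ∈ (1,2], satisfies: there exist positive constants m, M such that m(t−s) ≤ μ(t)t − μ(s)s ≤ M(t−s) for all t ≥ s ≥ 0. -/
/-!
Writing `μ(t) t = k∞ t + (k₀ - k∞) g(t)` with `g(t) = t (1 + λt²)^((θ-2)/2)`, one computes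
`g'(t) = (1 + λt²)^((θ-4)/2) (1 + (θ-1) λt²)`, which lies in `[0, 1]` for `1 ≤ θ ≤ 2`.
By the mean value theorem `0 ≤ g t - g s ≤ t - s`, so `m = k∞` and `M = k₀` work.
-/

noncomputable section

namespace Carreau

def shearPart (lam θ t : ℝ) : ℝ := t * (1 + lam * t ^ 2) ^ ((θ - 2) / 2)

def shearPartDeriv (lam θ t : ℝ) : ℝ :=
  (1 + lam * t ^ 2) ^ ((θ - 2) / 2 - 1) * (1 + (θ - 1) * (lam * t ^ 2))

variable {lam θ : ℝ}

lemma hasDerivAt_shearPart (hlam : 0 ≤ lam) (t : ℝ) :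
    HasDerivAt (shearPart lam θ) (shearPartDeriv lam θ t) t := by
  have hpos : 0 < 1 + lam * t ^ 2 := by positivity
  have hbase : HasDerivAt (fun t : ℝ => 1 + lam * t ^ 2) (lam * (2 * t)) t := by
    simpa using ((hasDerivAt_pow 2 t).const_mul lam).const_add 1
  have hprod := (hasDerivAt_id t).mul (hbase.rpow_const (p := (θ - 2) / 2) (Or.inl hpos.ne'))
  refine hprod.congr_deriv ?_
  have hsplit : (1 + lam * t ^ 2) ^ ((θ - 2) / 2)
      = (1 + lam * t ^ 2) ^ ((θ - 2) / 2 - 1) * (1 + lam * t ^ 2) := by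
    rw [← Real.rpow_add_one hpos.ne', sub_add_cancel]
  rw [shearPartDeriv, hsplit, id_eq]
  ring

lemma differentiable_shearPart (hlam : 0 ≤ lam) : Differentiable ℝ (shearPart lam θ) :=
  fun t => (hasDerivAt_shearPart hlam t).differentiableAt

lemma shearPartDeriv_nonneg (hlam : 0 ≤ lam) (hθ : 1 ≤ θ) (t : ℝ) :
    0 ≤ shearPartDeriv lam θ t := by
  have hx : 0 ≤ lam * t ^ 2 := by positivity
  have hfactor : 0 ≤ 1 + (θ - 1) * (lam * t ^ 2) := by nlinarith
  unfold shearPartDeriv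
  positivity

lemma shearPartDeriv_le_one (hlam : 0 ≤ lam) (hθ : θ ≤ 2) (t : ℝ) :
    shearPartDeriv lam θ t ≤ 1 := by
  have hpos : 0 < 1 + lam * t ^ 2 := by positivity
  have hx : 0 ≤ lam * t ^ 2 := by positivity
  calc shearPartDeriv lam θ t
      ≤ (1 + lam * t ^ 2) ^ ((θ - 2) / 2 - 1) * (1 + lam * t ^ 2) := by
        unfold shearPartDeriv
        exact mul_le_mul_of_nonneg_left (by nlinarith) (by positivity)
    _ = (1 + lam * t ^ 2) ^ ((θ - 2) / 2) := by
        rw [← Real.rpow_add_one hpos.ne', sub_add_cancel]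
    _ ≤ 1 := Real.rpow_le_one_of_one_le_of_nonpos (by linarith) (by linarith)

lemma shearPart_sub_nonneg (hlam : 0 ≤ lam) (hθ : 1 ≤ θ) {s t : ℝ} (hst : s ≤ t) :
    0 ≤ shearPart lam θ t - shearPart lam θ s := by
  simpa only [zero_mul] using mul_sub_le_image_sub_of_le_deriv (C := 0)
    (differentiable_shearPart hlam)
    (fun x => (hasDerivAt_shearPart hlam x).deriv ▸ shearPartDeriv_nonneg hlam hθ x) hst

lemma shearPart_sub_le (hlam : 0 ≤ lam) (hθ : θ ≤ 2) {s t : ℝ} (hst : s ≤ t) :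
    shearPart lam θ t - shearPart lam θ s ≤ t - s := by
  simpa only [one_mul] using image_sub_le_mul_sub_of_deriv_le (C := 1)
    (differentiable_shearPart hlam)
    (fun x => (hasDerivAt_shearPart hlam x).deriv ▸ shearPartDeriv_le_one hlam hθ x) hst

end Carreau

end

open Carreau in
theorem stmt_3 (k₀ kinf lam θ : ℝ) (hk : kinf < k₀) (hkinf : 0 < kinf)
    (hlam : 0 < lam) (hθ1 : 1 < θ) (hθ2 : θ ≤ 2)
    (μ : ℝ → ℝ) (hμ : ∀ t : ℝ, μ t = kinf + (k₀ - kinf) * (1 + lam * t ^ 2) ^ ((θ - 2) / 2)) :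
    ∃ m M : ℝ, 0 < m ∧ 0 < M ∧ ∀ s t : ℝ, 0 ≤ s → s ≤ t →
      m * (t - s) ≤ μ t * t - μ s * s ∧ μ t * t - μ s * s ≤ M * (t - s) := by
  refine ⟨kinf, k₀, hkinf, hkinf.trans hk, fun s t _ hst => ?_⟩
  have hsplit : μ t * t - μ s * s
      = kinf * (t - s) + (k₀ - kinf) * (shearPart lam θ t - shearPart lam θ s) := by
    rw [hμ t, hμ s, shearPart, shearPart]
    ring
  have hlower := shearPart_sub_nonneg hlam.le hθ1.le hst
  have hupper := shearPart_sub_le hlam.le hθ2 hst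
  have hgap : 0 ≤ k₀ - kinf := sub_nonneg.mpr hk.le
  rw [hsplit]
  constructor
  · nlinarith
  · nlinarith
end
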